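/- arXiv:2306.17270 — 4 statements merged into one kernel-verified Lean document; each statement's English description precedes it below -/
import Mathlib

section
/- Let H be a symmetric q × q real matrix with eigenvalues in [m, M], 0 < m ≤ M, let r > 0, let G ∈ ℝ^{n_y×q} with ‖G‖_F ≤ ε̄, let Φ̃ ∈ ℝ^{n_y×q}, and set Φ̃⁺ = Φ̃(I_q − rH) + rG. Then, with V(Φ) = (1/r)‖Φ‖_F², V(Φ̃⁺) − V(Φ̃) ≤ (rM² − 2m)·‖Φ̃‖_F² + 2(1 + rM)·ε̄·‖Φ̃‖_F + r·ε̄². -/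
open Matrix

/-- Frobenius norm of a real matrix. -/
noncomputable def frobNorm {a b : ℕ} (A : Matrix (Fin a) (Fin b) ℝ) : ℝ :=
  Real.sqrt (∑ i, ∑ j, (A i j) ^ 2)

open WithLp RealInnerProductSpace

/-!
Encode a matrix by the ℓ²-family of its rows: the Frobenius norm becomes a Hilbert space norm
and right multiplication by the symmetric `H` acts on each row as `H` itself. Expanding a row in
an orthonormal eigenbasis of `H` gives `m‖x‖² ≤ ⟪x, xH⟫` and `‖xH‖ ≤ M‖x‖`. Hence
`y = x(I - rH)` satisfies `‖y‖² ≤ (1 - 2rm + r²M²)‖x‖²` and `‖y‖ ≤ (1 + rM)‖x‖`, and expanding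
`‖y + rG‖²`, with Cauchy–Schwarz on the cross term, gives the bound.
-/

section Descent

variable {F : Type*} [NormedAddCommGroup F] [InnerProductSpace ℝ F]

theorem norm_sq_sub_smul_add_smul_sub_norm_sq_le {x a g : F} {m M r ε : ℝ} (hr : 0 ≤ r)
    (hxa : m * ‖x‖ ^ 2 ≤ ⟪x, a⟫) (ha : ‖a‖ ≤ M * ‖x‖) (hg : ‖g‖ ≤ ε) :
    ‖x - r • a + r • g‖ ^ 2 - ‖x‖ ^ 2 ≤
      r * ((r * M ^ 2 - 2 * m) * ‖x‖ ^ 2 + 2 * (1 + r * M) * ε * ‖x‖ + r * ε ^ 2) := by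
  have ha_sq : ‖a‖ ^ 2 ≤ M ^ 2 * ‖x‖ ^ 2 := by
    rw [← mul_pow]; exact pow_le_pow_left₀ (norm_nonneg a) ha 2
  have hg_sq : ‖g‖ ^ 2 ≤ ε ^ 2 := pow_le_pow_left₀ (norm_nonneg g) hg 2
  set y := x - r • a
  have hy_sq : ‖y‖ ^ 2 = ‖x‖ ^ 2 - 2 * r * ⟪x, a⟫ + r ^ 2 * ‖a‖ ^ 2 := by
    rw [norm_sub_sq_real, real_inner_smul_right, norm_smul, Real.norm_of_nonneg hr]; ring
  have hy : ‖y‖ ≤ (1 + r * M) * ‖x‖ := calc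
    ‖y‖ ≤ ‖x‖ + r * ‖a‖ := by
      simpa [norm_smul, Real.norm_of_nonneg hr] using norm_sub_le x (r • a)
    _ ≤ (1 + r * M) * ‖x‖ := by nlinarith
  have hyg : ⟪y, g⟫ ≤ (1 + r * M) * ‖x‖ * ε := calc
    ⟪y, g⟫ ≤ ‖y‖ * ‖g‖ := real_inner_le_norm y g
    _ ≤ (1 + r * M) * ‖x‖ * ε :=
      mul_le_mul hy hg (norm_nonneg g) ((norm_nonneg y).trans hy)
  rw [norm_add_sq_real, real_inner_smul_right, norm_smul, Real.norm_of_nonneg hr, hy_sq]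
  linarith [mul_le_mul_of_nonneg_left ha_sq (sq_nonneg r),
    mul_le_mul_of_nonneg_left hg_sq (sq_nonneg r), mul_le_mul_of_nonneg_left hyg hr,
    mul_le_mul_of_nonneg_left hxa hr]

end Descent

namespace PiLp

variable {ι : Type*} [Fintype ι] {β : ι → Type*}

theorem mul_norm_sq_le_inner [∀ i, NormedAddCommGroup (β i)] [∀ i, InnerProductSpace ℝ (β i)]
    {x y : PiLp 2 β} {m : ℝ} (h : ∀ i, m * ‖x i‖ ^ 2 ≤ ⟪x i, y i⟫) :
    m * ‖x‖ ^ 2 ≤ ⟪x, y⟫ := by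
  rw [norm_sq_eq_of_L2, inner_apply, Finset.mul_sum]
  exact Finset.sum_le_sum fun i _ => h i

theorem norm_le_mul_norm_of_forall [∀ i, SeminormedAddCommGroup (β i)] {x y : PiLp 2 β} {M : ℝ}
    (hM : 0 ≤ M) (h : ∀ i, ‖y i‖ ≤ M * ‖x i‖) :
    ‖y‖ ≤ M * ‖x‖ := by
  refine le_of_sq_le_sq ?_ (by positivity)
  rw [mul_pow, norm_sq_eq_of_L2, norm_sq_eq_of_L2, Finset.mul_sum]
  exact Finset.sum_le_sum fun i _ => by
    rw [← mul_pow]; exact pow_le_pow_left₀ (norm_nonneg _) (h i) 2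

end PiLp

namespace OrthonormalBasis

variable {ι E : Type*} [Fintype ι] [NormedAddCommGroup E] [InnerProductSpace ℝ E]
  (b : OrthonormalBasis ι ℝ E) {x y : E} {μ : ι → ℝ}

theorem mul_norm_sq_le_inner_of_repr_eq {m : ℝ} (hy : ∀ i, b.repr y i = μ i * b.repr x i)
    (hm : ∀ i, m ≤ μ i) : m * ‖x‖ ^ 2 ≤ ⟪x, y⟫ := by
  rw [← b.repr.norm_map, ← b.repr.inner_map_map, EuclideanSpace.real_norm_sq_eq,
    PiLp.inner_apply, Finset.mul_sum]
  refine Finset.sum_le_sum fun i _ => ?_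
  rw [hy, RCLike.inner_apply, conj_trivial]
  nlinarith [hm i, sq_nonneg (b.repr x i)]

theorem norm_le_mul_norm_of_repr_eq {M : ℝ} (hy : ∀ i, b.repr y i = μ i * b.repr x i)
    (hM₀ : 0 ≤ M) (hM : ∀ i, |μ i| ≤ M) : ‖y‖ ≤ M * ‖x‖ := by
  rw [← b.repr.norm_map, ← b.repr.norm_map x]
  refine PiLp.norm_le_mul_norm_of_forall hM₀ fun i => ?_
  rw [hy, Real.norm_eq_abs, Real.norm_eq_abs, abs_mul]
  exact mul_le_mul_of_nonneg_right (hM i) (abs_nonneg _)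

end OrthonormalBasis

namespace Matrix

variable {n : Type*} [Fintype n] [DecidableEq n] {H : Matrix n n ℝ}

theorem IsHermitian.eigenvectorBasis_repr_mulVec (hH : H.IsHermitian) (x : EuclideanSpace ℝ n)
    (i : n) : hH.eigenvectorBasis.repr (toLp 2 (H *ᵥ ofLp x)) i =
      hH.eigenvalues i * hH.eigenvectorBasis.repr x i := by
  have hsymm := isSymmetric_toEuclideanLin_iff.mpr hH
  rw [OrthonormalBasis.repr_apply_apply, OrthonormalBasis.repr_apply_apply]
  have hswap := hsymm (hH.eigenvectorBasis i) x
  rw [toLpLin_apply, toLpLin_apply, hH.mulVec_eigenvectorBasis] at hswap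
  rw [← hswap]
  simp [inner_smul_left]

theorem IsHermitian.mul_norm_sq_le_inner_mulVec (hH : H.IsHermitian) {m : ℝ}
    (hm : ∀ i, m ≤ hH.eigenvalues i) (x : EuclideanSpace ℝ n) :
    m * ‖x‖ ^ 2 ≤ ⟪x, toLp 2 (H *ᵥ ofLp x)⟫ :=
  hH.eigenvectorBasis.mul_norm_sq_le_inner_of_repr_eq (hH.eigenvectorBasis_repr_mulVec x) hm

theorem IsHermitian.norm_mulVec_le (hH : H.IsHermitian) {M : ℝ} (hM₀ : 0 ≤ M)
    (hM : ∀ i, |hH.eigenvalues i| ≤ M) (x : EuclideanSpace ℝ n) :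
    ‖toLp 2 (H *ᵥ ofLp x)‖ ≤ M * ‖x‖ :=
  hH.eigenvectorBasis.norm_le_mul_norm_of_repr_eq (hH.eigenvectorBasis_repr_mulVec x) hM₀ hM

end Matrix

section Rows

variable {ι κ : Type*}

def rowsL2 (A : Matrix ι κ ℝ) : PiLp 2 (fun _ : ι => EuclideanSpace ℝ κ) :=
  toLp 2 fun i => toLp 2 (A i)

theorem frobNorm_eq_norm_rowsL2 {a b : ℕ} (A : Matrix (Fin a) (Fin b) ℝ) :
    frobNorm A = ‖rowsL2 A‖ := by
  rw [frobNorm, PiLp.norm_eq_of_L2]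
  simp [rowsL2, EuclideanSpace.real_norm_sq_eq]

theorem rowsL2_add (A B : Matrix ι κ ℝ) : rowsL2 (A + B) = rowsL2 A + rowsL2 B := rfl

theorem rowsL2_sub (A B : Matrix ι κ ℝ) : rowsL2 (A - B) = rowsL2 A - rowsL2 B := rfl

theorem rowsL2_smul (c : ℝ) (A : Matrix ι κ ℝ) : rowsL2 (c • A) = c • rowsL2 A := rfl

theorem rowsL2_mul_apply [Fintype κ] (A : Matrix ι κ ℝ) (H : Matrix κ κ ℝ) (i : ι) :
    rowsL2 (A * H) i = toLp 2 (Hᵀ *ᵥ ofLp (rowsL2 A i)) := by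
  rw [mulVec_transpose]; rfl

end Rows

/-- One-step Lyapunov difference bound with disturbance: for
`Φ̃⁺ = Φ̃(I − rH) + rG`, `‖G‖_F ≤ ε̄`, and `V(Φ) = (1/r)‖Φ‖_F²`,
`V(Φ̃⁺) − V(Φ̃) ≤ (rM² − 2m)‖Φ̃‖_F² + 2(1 + rM)ε̄‖Φ̃‖_F + rε̄²`. -/
theorem lyapunov_difference_disturbed {q ny : ℕ} (m M r ε : ℝ)
    (hm : 0 < m) (hmM : m ≤ M) (hr : 0 < r)
    (H : Matrix (Fin q) (Fin q) ℝ) (hH : H.IsHermitian)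
    (heig : ∀ i, m ≤ hH.eigenvalues i ∧ hH.eigenvalues i ≤ M)
    (G : Matrix (Fin ny) (Fin q) ℝ) (hG : frobNorm G ≤ ε)
    (Φt : Matrix (Fin ny) (Fin q) ℝ) :
    let Φt' := Φt * ((1 : Matrix (Fin q) (Fin q) ℝ) - r • H) + r • G
    (1 / r) * frobNorm Φt' ^ 2 - (1 / r) * frobNorm Φt ^ 2 ≤
      (r * M ^ 2 - 2 * m) * frobNorm Φt ^ 2 +
        2 * (1 + r * M) * ε * frobNorm Φt + r * ε ^ 2 := by
  intro Φt'
  have hM₀ : 0 ≤ M := hm.le.trans hmM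
  have hHt : Hᵀ = H := by simpa using hH.eq
  have hrows : rowsL2 Φt' = rowsL2 Φt - r • rowsL2 (Φt * H) + r • rowsL2 G := by
    simp only [Φt', Matrix.mul_sub, Matrix.mul_one, Matrix.mul_smul, rowsL2_add, rowsL2_sub,
      rowsL2_smul]
  have hlower : m * ‖rowsL2 Φt‖ ^ 2 ≤ ⟪rowsL2 Φt, rowsL2 (Φt * H)⟫ :=
    PiLp.mul_norm_sq_le_inner fun i => by
      rw [rowsL2_mul_apply, hHt]
      exact hH.mul_norm_sq_le_inner_mulVec (fun j => (heig j).1) _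
  have hupper : ‖rowsL2 (Φt * H)‖ ≤ M * ‖rowsL2 Φt‖ :=
    PiLp.norm_le_mul_norm_of_forall hM₀ fun i => by
      rw [rowsL2_mul_apply, hHt]
      exact hH.norm_mulVec_le hM₀
        (fun j => abs_le.mpr ⟨by linarith [(heig j).1], (heig j).2⟩) _
  have hG' : ‖rowsL2 G‖ ≤ ε := frobNorm_eq_norm_rowsL2 G ▸ hG
  have key := norm_sq_sub_smul_add_smul_sub_norm_sq_le hr.le hlower hupper hG'
  rw [← frobNorm_eq_norm_rowsL2, ← hrows, ← frobNorm_eq_norm_rowsL2] at key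
  rw [← mul_sub, one_div_mul_eq_div, div_le_iff₀ hr]
  linarith
end

section
/- Fix 0 < m ≤ M and 0 < r < 2m/M², and set ρ = max(|1 − rm|, |1 − rM|), so that ρ < 1. Let H : ℕ → (symmetric q × q real matrices) be such that every eigenvalue of H(k) lies in [m, M] for each k, and let Φ̃ : ℕ → ℝ^{n_y×q} satisfy Φ̃(k+1) = Φ̃(k)(I_q − r H(k)) for all k. Then ‖Φ̃(k)‖_F ≤ ρ^k · ‖Φ̃(0)‖_F for all k, and in particular Φ̃(k) → 0 as k → ∞. -/
open Matrix

lemma pres_dot {q : ℕ} (V : Matrix (Fin q) (Fin q) ℝ) (hV : Vᵀ * V = 1) (x : Fin q → ℝ) :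
    (V *ᵥ x) ⬝ᵥ (V *ᵥ x) = x ⬝ᵥ x := by
  rw [dotProduct_mulVec, ← mulVec_transpose, mulVec_mulVec, hV, one_mulVec]

lemma key_quad {q : ℕ} (Hm : Matrix (Fin q) (Fin q) ℝ) (hHm : Hm.IsHermitian) (r ρ : ℝ)
    (hρ0 : 0 ≤ ρ) (he : ∀ i, |1 - r * hHm.eigenvalues i| ≤ ρ) (v : Fin q → ℝ) :
    (((1 : Matrix (Fin q) (Fin q) ℝ) - r • Hm) *ᵥ v) ⬝ᵥ
      (((1 : Matrix (Fin q) (Fin q) ℝ) - r • Hm) *ᵥ v) ≤ ρ ^ 2 * (v ⬝ᵥ v) := by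
  set U := (hHm.eigenvectorUnitary : Matrix (Fin q) (Fin q) ℝ) with hUdef
  have hU : U * star U = 1 := (Matrix.mem_unitaryGroup_iff).mp hHm.eigenvectorUnitary.2
  have hU' : star U * U = 1 := (Matrix.mem_unitaryGroup_iff').mp hHm.eigenvectorUnitary.2
  have hstar : star U = Uᵀ := by
    rw [Matrix.star_eq_conjTranspose, conjTranspose_eq_transpose_of_trivial]
  have hdiag : (1 : Matrix (Fin q) (Fin q) ℝ) - r • Hm =
      U * diagonal (fun i => 1 - r * hHm.eigenvalues i) * star U := by
    have hd : diagonal (fun i => 1 - r * hHm.eigenvalues i)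
        = 1 - r • diagonal (RCLike.ofReal ∘ hHm.eigenvalues : Fin q → ℝ) := by
      rw [← diagonal_one, ← diagonal_smul, ← diagonal_sub]
      congr 1
    rw [hd, mul_sub, sub_mul, mul_one, hU, mul_smul_comm, smul_mul_assoc]
    exact congrArg (fun X => 1 - r • X)
      (hHm.spectral_theorem.trans (Unitary.conjStarAlgAut_apply _ _))
  set w := star U *ᵥ v with hw
  set x := diagonal (fun i => 1 - r * hHm.eigenvalues i) *ᵥ w with hx
  have hmv : ((1 : Matrix (Fin q) (Fin q) ℝ) - r • Hm) *ᵥ v = U *ᵥ x := by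
    rw [hdiag, hx, hw, mulVec_mulVec, mulVec_mulVec]
  rw [hmv, pres_dot U (by rw [← hstar]; exact hU') x]
  have hww : w ⬝ᵥ w = v ⬝ᵥ v := by
    rw [hw, hstar]
    exact pres_dot Uᵀ (by rw [transpose_transpose, ← hstar]; exact hU) v
  have hxx : x ⬝ᵥ x ≤ ρ ^ 2 * (w ⬝ᵥ w) := by
    rw [hx]
    simp only [dotProduct, mulVec_diagonal, Finset.mul_sum]
    refine Finset.sum_le_sum fun i _ => ?_
    have h1 : (1 - r * hHm.eigenvalues i) ^ 2 ≤ ρ ^ 2 := by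
      have := he i
      nlinarith [abs_nonneg (1 - r * hHm.eigenvalues i), sq_abs (1 - r * hHm.eigenvalues i)]
    nlinarith [sq_nonneg (w i), sq_nonneg (1 - r * hHm.eigenvalues i)]
  rw [← hww]; exact hxx

lemma frob_step {q ny : ℕ} (Hm : Matrix (Fin q) (Fin q) ℝ) (hHm : Hm.IsHermitian) (r ρ : ℝ)
    (hρ0 : 0 ≤ ρ)
    (hq : ∀ v : Fin q → ℝ, ((((1 : Matrix (Fin q) (Fin q) ℝ) - r • Hm) *ᵥ v) ⬝ᵥ
      (((1 : Matrix (Fin q) (Fin q) ℝ) - r • Hm) *ᵥ v)) ≤ ρ ^ 2 * (v ⬝ᵥ v))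
    (A : Matrix (Fin ny) (Fin q) ℝ) :
    frobNorm (A * ((1 : Matrix (Fin q) (Fin q) ℝ) - r • Hm)) ≤ ρ * frobNorm A := by
  set B := (1 : Matrix (Fin q) (Fin q) ℝ) - r • Hm with hB
  have hBsym : ∀ l j, B l j = B j l := by
    intro l j
    have h : Bᵀ = B := by
      rw [hB, transpose_sub, transpose_smul, transpose_one,
        ← conjTranspose_eq_transpose_of_trivial, hHm.eq]
    conv_lhs => rw [← h]
    rfl
  have hrow : ∀ i, (A * B) i = B *ᵥ (A i) := by
    intro i; funext j
    rw [mul_apply, mulVec]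
    simp only [dotProduct]
    exact Finset.sum_congr rfl fun l _ => by rw [hBsym j l, mul_comm]
  have hsum : (∑ i, ∑ j, ((A * B) i j) ^ 2) ≤ ρ ^ 2 * ∑ i, ∑ j, (A i j) ^ 2 := by
    rw [Finset.mul_sum]
    refine Finset.sum_le_sum fun i _ => ?_
    have h1 : (∑ j, ((A * B) i j) ^ 2) = (B *ᵥ (A i)) ⬝ᵥ (B *ᵥ (A i)) := by
      rw [hrow i]; simp [dotProduct, pow_two]
    have h2 : (∑ j, (A i j) ^ 2) = (A i) ⬝ᵥ (A i) := by simp [dotProduct, pow_two]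
    rw [h1, h2]
    exact hq (A i)
  calc frobNorm (A * B) ≤ Real.sqrt (ρ ^ 2 * ∑ i, ∑ j, (A i j) ^ 2) :=
        Real.sqrt_le_sqrt hsum
    _ = ρ * frobNorm A := by
        rw [Real.sqrt_mul (sq_nonneg ρ), Real.sqrt_sq hρ0, frobNorm]

lemma entry_le_frob {a b : ℕ} (A : Matrix (Fin a) (Fin b) ℝ) (i : Fin a) (j : Fin b) :
    |A i j| ≤ frobNorm A := by
  rw [← Real.sqrt_sq_eq_abs, frobNorm]
  apply Real.sqrt_le_sqrt
  calc (A i j) ^ 2 ≤ ∑ j', (A i j') ^ 2 :=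
        Finset.single_le_sum (f := fun j' => (A i j') ^ 2) (fun j' _ => sq_nonneg _) (Finset.mem_univ j)
    _ ≤ ∑ i', ∑ j', (A i' j') ^ 2 :=
        Finset.single_le_sum (f := fun i' => ∑ j', (A i' j') ^ 2)
          (fun i' _ => Finset.sum_nonneg fun j' _ => sq_nonneg _) (Finset.mem_univ i)

/-- Disturbance-free convergence of the concurrent learning error: with
`ρ = max(|1 − rm|, |1 − rM|) < 1` and `Φ̃(k+1) = Φ̃(k)(I − r H(k))`,
`‖Φ̃(k)‖_F ≤ ρ^k ‖Φ̃(0)‖_F` and `Φ̃(k) → 0`. -/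
theorem concurrent_learning_convergence {q ny : ℕ} (m M r : ℝ)
    (hm : 0 < m) (hmM : m ≤ M) (hr0 : 0 < r) (hr : r < 2 * m / M ^ 2)
    (H : ℕ → Matrix (Fin q) (Fin q) ℝ) (hH : ∀ k, (H k).IsHermitian)
    (heig : ∀ k i, m ≤ (hH k).eigenvalues i ∧ (hH k).eigenvalues i ≤ M)
    (Φt : ℕ → Matrix (Fin ny) (Fin q) ℝ)
    (hrec : ∀ k, Φt (k + 1) = Φt k * ((1 : Matrix (Fin q) (Fin q) ℝ) - r • H k)) :
    let ρ := max |1 - r * m| |1 - r * M|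
    ρ < 1 ∧ (∀ k, frobNorm (Φt k) ≤ ρ ^ k * frobNorm (Φt 0)) ∧
      Filter.Tendsto Φt Filter.atTop (nhds 0) := by
  intro ρ
  have hM0 : 0 < M := lt_of_lt_of_le hm hmM
  have hrM2 : r * M ^ 2 < 2 * m := by
    have h2 : (0:ℝ) < M ^ 2 := by positivity
    exact (lt_div_iff₀ h2).mp hr
  have hrM : r * M < 2 := by nlinarith
  have hrm : r * m < 2 := by nlinarith
  have hρ0 : 0 ≤ ρ := le_trans (abs_nonneg _) (le_max_left _ _)
  have hρ1 : ρ < 1 := by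
    apply max_lt
    · rw [abs_lt]; constructor <;> nlinarith
    · rw [abs_lt]; constructor <;> nlinarith
  have he : ∀ k i, |1 - r * (hH k).eigenvalues i| ≤ ρ := by
    intro k i
    obtain ⟨h1, h2⟩ := heig k i
    rw [abs_le]
    constructor
    · have : -(1 - r * M) ≤ |1 - r * M| := neg_le_abs _
      have h3 : -(ρ) ≤ -(|1 - r * M|) := neg_le_neg (le_max_right _ _)
      nlinarith
    · have : 1 - r * m ≤ |1 - r * m| := le_abs_self _
      have h3 : |1 - r * m| ≤ ρ := le_max_left _ _
      nlinarith
  have hbound : ∀ k, frobNorm (Φt k) ≤ ρ ^ k * frobNorm (Φt 0) := by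
    intro k
    induction k with
    | zero => simp
    | succ k ih =>
      have hstep := frob_step (H k) (hH k) r ρ hρ0
        (key_quad (H k) (hH k) r ρ hρ0 (he k)) (Φt k)
      rw [← hrec k] at hstep
      calc frobNorm (Φt (k + 1)) ≤ ρ * frobNorm (Φt k) := hstep
        _ ≤ ρ * (ρ ^ k * frobNorm (Φt 0)) := by
            exact mul_le_mul_of_nonneg_left ih hρ0
        _ = ρ ^ (k + 1) * frobNorm (Φt 0) := by ring
  refine ⟨hρ1, hbound, ?_⟩
  have htend : Filter.Tendsto (fun k => ρ ^ k * frobNorm (Φt 0)) Filter.atTop (nhds 0) := by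
    have := (tendsto_pow_atTop_nhds_zero_of_lt_one hρ0 hρ1).mul_const (frobNorm (Φt 0))
    simpa using this
  refine tendsto_pi_nhds.mpr ?_
  intro i
  rw [tendsto_pi_nhds]
  intro j
  have : Filter.Tendsto (fun k => Φt k i j) Filter.atTop (nhds 0) := by
    rw [tendsto_zero_iff_abs_tendsto_zero]
    exact squeeze_zero (fun k => abs_nonneg _)
      (fun k => le_trans (entry_le_frob (Φt k) i j) (hbound k)) htend
  simpa using this
end

section
/- Fix 0 < m ≤ M and 0 < r < 2m/M², and set ρ = max(|1 − rm|, |1 − rM|) < 1. Let H : ℕ → (symmetric q × q real matrices) with all eigenvalues of each H(k) in [m, M], let G : ℕ → ℝ^{n_y×q} with ‖G(k)‖_F ≤ ε̄ for all k, and let Φ̃ : ℕ → ℝ^{n_y×q} satisfy Φ̃(k+1) = Φ̃(k)(I_q − r H(k)) + r G(k). Then for all k, ‖Φ̃(k)‖_F ≤ ρ^k ‖Φ̃(0)‖_F + r ε̄ (1 − ρ^k)/(1 − ρ); in particular Φ̃ is uniformly ultimately bounded with limsup_{k→∞} ‖Φ̃(k)‖_F ≤ r ε̄/(1 − ρ).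 -/
open Matrix

lemma frobNorm_eq' {a b : ℕ} (A : Matrix (Fin a) (Fin b) ℝ) :
    frobNorm A = ‖(WithLp.equiv 2 (Fin a × Fin b → ℝ)).symm (fun p => A p.1 p.2)‖ := by
  simp [frobNorm, EuclideanSpace.norm_eq, Fintype.sum_prod_type, Real.norm_eq_abs, sq_abs]

lemma frobNorm_nonneg' {a b : ℕ} (A : Matrix (Fin a) (Fin b) ℝ) : 0 ≤ frobNorm A :=
  Real.sqrt_nonneg _

lemma frobNorm_add_le' {a b : ℕ} (A B : Matrix (Fin a) (Fin b) ℝ) :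
    frobNorm (A + B) ≤ frobNorm A + frobNorm B := by
  rw [frobNorm_eq', frobNorm_eq', frobNorm_eq']
  exact norm_add_le ((WithLp.equiv 2 (Fin a × Fin b → ℝ)).symm (fun p => A p.1 p.2))
    ((WithLp.equiv 2 (Fin a × Fin b → ℝ)).symm (fun p => B p.1 p.2))

lemma frobNorm_smul' {a b : ℕ} (c : ℝ) (A : Matrix (Fin a) (Fin b) ℝ) :
    frobNorm (c • A) = |c| * frobNorm A := by
  rw [frobNorm_eq', frobNorm_eq']
  rw [show (WithLp.equiv 2 (Fin a × Fin b → ℝ)).symm (fun p => (c • A) p.1 p.2)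
      = c • (WithLp.equiv 2 (Fin a × Fin b → ℝ)).symm (fun p => A p.1 p.2) from rfl]
  rw [norm_smul, Real.norm_eq_abs]

lemma key_psd' {q : ℕ} (r ρ : ℝ) (H : Matrix (Fin q) (Fin q) ℝ) (hH : H.IsHermitian)
    (hb : ∀ i, |1 - r * hH.eigenvalues i| ≤ ρ) :
    (ρ ^ 2 • (1 : Matrix (Fin q) (Fin q) ℝ)
      - ((1 : Matrix (Fin q) (Fin q) ℝ) - r • H)
        * ((1 : Matrix (Fin q) (Fin q) ℝ) - r • H)).PosSemidef := by
  set U : Matrix (Fin q) (Fin q) ℝ := (hH.eigenvectorUnitary : Matrix (Fin q) (Fin q) ℝ) with hUdef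
  have hUU : U * star U = 1 := mem_unitaryGroup_iff.mp hH.eigenvectorUnitary.2
  have hUU' : star U * U = 1 := mem_unitaryGroup_iff'.mp hH.eigenvectorUnitary.2
  have hsub : ∀ D E : Matrix (Fin q) (Fin q) ℝ,
      U * D * star U - U * E * star U = U * (D - E) * star U := by
    intro D E; rw [Matrix.mul_sub, Matrix.sub_mul]
  have hsm : ∀ (c : ℝ) (D : Matrix (Fin q) (Fin q) ℝ),
      c • (U * D * star U) = U * (c • D) * star U := by
    intro c D; rw [Matrix.mul_smul, Matrix.smul_mul]
  have hmul : ∀ D E : Matrix (Fin q) (Fin q) ℝ,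
      (U * D * star U) * (U * E * star U) = U * (D * E) * star U := by
    intro D E
    simp only [← Matrix.mul_assoc]
    rw [Matrix.mul_assoc (U * D) (star U) U, hUU', Matrix.mul_one]
  have hone : (1 : Matrix (Fin q) (Fin q) ℝ) = U * 1 * star U := by rw [mul_one, hUU]
  have hHspec : H = U * diagonal hH.eigenvalues * star U := by
    have := hH.spectral_theorem
    simpa using this
  set d : Fin q → ℝ := fun i => 1 - r * hH.eigenvalues i with hd
  have hB : (1 : Matrix (Fin q) (Fin q) ℝ) - r • H = U * diagonal d * star U := by
    rw [hHspec, hsm]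
    nth_rewrite 1 [hone]
    rw [hsub]
    congr 2
    ext i j
    by_cases h : i = j <;> simp [h, diagonal, hd, Matrix.one_apply]
  have hC : ρ ^ 2 • (1 : Matrix (Fin q) (Fin q) ℝ)
      - ((1 : Matrix (Fin q) (Fin q) ℝ) - r • H) * ((1 : Matrix (Fin q) (Fin q) ℝ) - r • H)
      = U * diagonal (fun i => ρ ^ 2 - d i * d i) * star U := by
    rw [hB, hmul, diagonal_mul_diagonal]
    nth_rewrite 1 [hone]
    rw [hsm, hsub]
    congr 2
    ext i j
    by_cases h : i = j <;> simp [h, diagonal, Matrix.one_apply]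
  rw [hC]
  have hdiag : (diagonal (fun i => ρ ^ 2 - d i * d i)).PosSemidef := by
    refine posSemidef_diagonal_iff.mpr fun i => ?_
    have h := hb i
    have := abs_nonneg (d i)
    nlinarith [sq_abs (d i)]
  have := hdiag.mul_mul_conjTranspose_same U
  simpa [star_eq_conjTranspose] using this

lemma frob_mul_le' {a q : ℕ} (ρ : ℝ) (hρ : 0 ≤ ρ) (A : Matrix (Fin a) (Fin q) ℝ)
    (B : Matrix (Fin q) (Fin q) ℝ) (hBsym : Bᵀ = B)
    (hpsd : (ρ ^ 2 • (1 : Matrix (Fin q) (Fin q) ℝ) - B * B).PosSemidef) :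
    frobNorm (A * B) ≤ ρ * frobNorm A := by
  have hnn : 0 ≤ ρ * frobNorm A := mul_nonneg hρ (frobNorm_nonneg' A)
  rw [frobNorm, show (ρ * frobNorm A) = Real.sqrt ((ρ * frobNorm A) ^ 2) from
    (Real.sqrt_sq hnn).symm]
  apply Real.sqrt_le_sqrt
  have hfa : (ρ * frobNorm A) ^ 2 = ρ ^ 2 * ∑ i, ∑ j, (A i j) ^ 2 := by
    rw [mul_pow, frobNorm, Real.sq_sqrt (by positivity)]
  rw [hfa, Finset.mul_sum]
  apply Finset.sum_le_sum
  intro i _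
  set x : Fin q → ℝ := A i with hx
  have h0 := hpsd.dotProduct_mulVec_nonneg x
  have hsx : star x = x := by funext j; simp
  rw [hsx] at h0
  have hvm : x ᵥ* B = B *ᵥ x := by rw [← hBsym, Matrix.mulVec_transpose, hBsym]
  have h1 : ∑ j, ((A * B) i j) ^ 2 = (B *ᵥ x) ⬝ᵥ (B *ᵥ x) := by
    rw [← hvm]
    simp [Matrix.mul_apply, Matrix.vecMul, dotProduct, hx, sq]
  have h2 : (B *ᵥ x) ⬝ᵥ (B *ᵥ x) = x ⬝ᵥ ((B * B) *ᵥ x) := by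
    rw [← Matrix.mulVec_mulVec, Matrix.dotProduct_mulVec x B (B *ᵥ x), hvm]
  have h3 : x ⬝ᵥ ((ρ ^ 2 • (1 : Matrix (Fin q) (Fin q) ℝ) - B * B) *ᵥ x)
      = ρ ^ 2 * (x ⬝ᵥ x) - x ⬝ᵥ ((B * B) *ᵥ x) := by
    rw [Matrix.sub_mulVec, dotProduct_sub, Matrix.smul_mulVec,
      Matrix.one_mulVec, dotProduct_smul]
    simp [smul_eq_mul]
  have h4 : x ⬝ᵥ x = ∑ j, (A i j) ^ 2 := by simp [dotProduct, hx, sq]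
  rw [h1, h2]
  rw [h3] at h0
  rw [← h4]
  linarith

/-- UUB part of the concurrent learning theorem: with
`ρ = max(|1 − rm|, |1 − rM|) < 1`, bounded disturbance `‖G(k)‖_F ≤ ε̄`, and
`Φ̃(k+1) = Φ̃(k)(I − r H(k)) + r G(k)`,
`‖Φ̃(k)‖_F ≤ ρ^k ‖Φ̃(0)‖_F + r ε̄ (1 − ρ^k)/(1 − ρ)` and
`limsup ‖Φ̃(k)‖_F ≤ r ε̄/(1 − ρ)`. -/
theorem concurrent_learning_uub {q ny : ℕ} (m M r ε : ℝ)
    (hm : 0 < m) (hmM : m ≤ M) (hr0 : 0 < r) (hr : r < 2 * m / M ^ 2)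
    (H : ℕ → Matrix (Fin q) (Fin q) ℝ) (hH : ∀ k, (H k).IsHermitian)
    (heig : ∀ k i, m ≤ (hH k).eigenvalues i ∧ (hH k).eigenvalues i ≤ M)
    (G : ℕ → Matrix (Fin ny) (Fin q) ℝ) (hG : ∀ k, frobNorm (G k) ≤ ε)
    (Φt : ℕ → Matrix (Fin ny) (Fin q) ℝ)
    (hrec : ∀ k, Φt (k + 1) =
      Φt k * ((1 : Matrix (Fin q) (Fin q) ℝ) - r • H k) + r • G k) :
    let ρ := max |1 - r * m| |1 - r * M|
    ρ < 1 ∧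
      (∀ k, frobNorm (Φt k) ≤ ρ ^ k * frobNorm (Φt 0) + r * ε * (1 - ρ ^ k) / (1 - ρ)) ∧
      Filter.limsup (fun k => frobNorm (Φt k)) Filter.atTop ≤ r * ε / (1 - ρ) := by
  intro ρ
  have hM0 : (0 : ℝ) < M := lt_of_lt_of_le hm hmM
  have hrM2 : r * M ^ 2 < 2 * m := (lt_div_iff₀ (by positivity)).mp hr
  have hρ1 : ρ < 1 := by
    apply max_lt
    · rw [abs_lt]
      constructor <;> nlinarith [mul_pos hr0 hm, sq_nonneg (M - m)]
    · rw [abs_lt]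
      constructor <;> nlinarith [mul_pos hr0 hM0, sq_nonneg (M - m)]
  have hρ0 : 0 ≤ ρ := le_trans (abs_nonneg _) (le_max_left _ _)
  have hεnn : 0 ≤ ε := le_trans (frobNorm_nonneg' (G 0)) (hG 0)
  have h1ρ : 0 < 1 - ρ := by linarith
  -- one step contraction
  have step : ∀ k, frobNorm (Φt (k + 1)) ≤ ρ * frobNorm (Φt k) + r * ε := by
    intro k
    rw [hrec k]
    have hsym : ((1 : Matrix (Fin q) (Fin q) ℝ) - r • H k)ᵀ
        = (1 : Matrix (Fin q) (Fin q) ℝ) - r • H k := by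
      have hHt : (H k)ᵀ = H k := by
        ext i j
        have := congrFun (congrFun (hH k).eq i) j
        simpa [conjTranspose_apply] using this
      rw [transpose_sub, transpose_one, transpose_smul, hHt]
    have hbk : ∀ i, |1 - r * (hH k).eigenvalues i| ≤ ρ := by
      intro i
      have h1 : 1 - r * M ≤ 1 - r * (hH k).eigenvalues i :=
        sub_le_sub_left (mul_le_mul_of_nonneg_left (heig k i).2 hr0.le) 1
      have h2 : 1 - r * (hH k).eigenvalues i ≤ 1 - r * m :=
        sub_le_sub_left (mul_le_mul_of_nonneg_left (heig k i).1 hr0.le) 1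
      have := abs_le_max_abs_abs h1 h2
      rwa [max_comm] at this
    calc frobNorm (Φt k * ((1 : Matrix (Fin q) (Fin q) ℝ) - r • H k) + r • G k)
        ≤ frobNorm (Φt k * ((1 : Matrix (Fin q) (Fin q) ℝ) - r • H k)) + frobNorm (r • G k) :=
          frobNorm_add_le' _ _
      _ ≤ ρ * frobNorm (Φt k) + r * ε := by
          apply add_le_add
          · exact frob_mul_le' ρ hρ0 _ _ hsym (key_psd' r ρ (H k) (hH k) hbk)
          · rw [frobNorm_smul', abs_of_pos hr0]
            exact mul_le_mul_of_nonneg_left (hG k) hr0.le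
  -- induction bound
  have bound : ∀ k, frobNorm (Φt k)
      ≤ ρ ^ k * frobNorm (Φt 0) + r * ε * (1 - ρ ^ k) / (1 - ρ) := by
    intro k
    induction k with
    | zero => simp
    | succ k ih =>
      have h := step k
      have h2 : ρ * frobNorm (Φt k)
          ≤ ρ * (ρ ^ k * frobNorm (Φt 0) + r * ε * (1 - ρ ^ k) / (1 - ρ)) :=
        mul_le_mul_of_nonneg_left ih hρ0
      have key : ρ * (ρ ^ k * frobNorm (Φt 0) + r * ε * (1 - ρ ^ k) / (1 - ρ)) + r * ε
          = ρ ^ (k + 1) * frobNorm (Φt 0) + r * ε * (1 - ρ ^ (k + 1)) / (1 - ρ) := by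
        field_simp
        ring
      linarith
  refine ⟨hρ1, bound, ?_⟩
  -- limsup
  set c := r * ε / (1 - ρ) with hc
  have hρk : Filter.Tendsto (fun k : ℕ => ρ ^ k) Filter.atTop (nhds 0) :=
    tendsto_pow_atTop_nhds_zero_of_lt_one hρ0 hρ1
  have hgt : Filter.Tendsto (fun k : ℕ => ρ ^ k * frobNorm (Φt 0) + c) Filter.atTop (nhds c) := by
    have := (hρk.mul_const (frobNorm (Φt 0))).add_const c
    simpa using this
  have hle : ∀ k, frobNorm (Φt k) ≤ ρ ^ k * frobNorm (Φt 0) + c := by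
    intro k
    refine (bound k).trans ?_
    have hd : r * ε * (1 - ρ ^ k) / (1 - ρ) ≤ c := by
      rw [hc, div_le_div_iff₀ h1ρ h1ρ]
      nlinarith [mul_nonneg (mul_nonneg (mul_nonneg hr0.le hεnn) h1ρ.le) (pow_nonneg hρ0 k)]
    linarith
  have hcob : Filter.IsCoboundedUnder (· ≤ ·) Filter.atTop (fun k => frobNorm (Φt k)) :=
    Filter.isCoboundedUnder_le_of_le Filter.atTop (fun k => frobNorm_nonneg' (Φt k))
  have hbdd : Filter.IsBoundedUnder (· ≤ ·) Filter.atTop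
      (fun k : ℕ => ρ ^ k * frobNorm (Φt 0) + c) := hgt.isBoundedUnder_le
  calc Filter.limsup (fun k => frobNorm (Φt k)) Filter.atTop
      ≤ Filter.limsup (fun k : ℕ => ρ ^ k * frobNorm (Φt 0) + c) Filter.atTop :=
        Filter.limsup_le_limsup (Filter.Eventually.of_forall hle) hcob hbdd
    _ = c := hgt.limsup_eq
end

section
/- Let h : ℝ^n → ℝ be Lipschitz with constant η ≥ 0, let ε ≥ 0, let 0 < γ ≤ 1, and let x, x̂ : ℕ → ℝ^n be sequences such that (i) ‖x(k) − x̂(k)‖ ≤ ε for every k ∈ ℕ, (ii) h(x̂(k+1)) ≤ (1−γ)·h(x̂(k)) − γ·η·ε for every k ∈ ℕ, and (iii) h(x̂(0)) + η·ε ≤ 0. Then for every k ∈ ℕ, h(x̂(k)) + η·ε ≤ 0 and h(x(k)) ≤ 0; i.e., the safe set S = {z : h(z) ≤ 0} is forward invariant for the true trajectory x despite the control learning error, system identification error, and unknown disturbance. -/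
/-!
Shifting `h` by the Lipschitz margin `η ε` turns the RCBF constraint into the contraction
`h_r(x̂(k+1)) ≤ (1 - γ) h_r(x̂(k))` with `1 - γ ≥ 0`, so `h_r(x̂(k))` stays nonpositive by induction.
Since the true state is within `ε` of the nominal one, `h(x(k)) ≤ h(x̂(k)) + η ε = h_r(x̂(k)) ≤ 0`.
-/

theorem nonpos_of_succ_le_mul {α : Type*} [MulZeroClass α] [Preorder α] [PosMulMono α]
    {u : ℕ → α} {a : α} (ha : 0 ≤ a) (hu : ∀ k, u (k + 1) ≤ a * u k) (h0 : u 0 ≤ 0) :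
    ∀ k, u k ≤ 0
  | 0 => h0
  | k + 1 => (hu k).trans (mul_nonpos_of_nonneg_of_nonpos ha (nonpos_of_succ_le_mul ha hu h0 k))

theorem le_add_mul_of_abs_sub_le_mul_norm {E : Type*} [SeminormedAddCommGroup E] {h : E → ℝ}
    {η ε : ℝ} {a b : E} (hη : 0 ≤ η) (hLip : |h a - h b| ≤ η * ‖a - b‖) (hab : ‖a - b‖ ≤ ε) :
    h a ≤ h b + η * ε := by
  have := mul_le_mul_of_nonneg_left hab hη
  linarith [le_of_abs_le hLip]

theorem rcbf_forward_invariance_general {n : ℕ} (h : EuclideanSpace ℝ (Fin n) → ℝ)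
    (η ε γ : ℝ) (hη : 0 ≤ η) (hγ1 : γ ≤ 1)
    (hLip : ∀ a b : EuclideanSpace ℝ (Fin n), |h a - h b| ≤ η * ‖a - b‖)
    (x xhat : ℕ → EuclideanSpace ℝ (Fin n))
    (hd : ∀ k, ‖x k - xhat k‖ ≤ ε)
    (hcbf : ∀ k, h (xhat (k + 1)) ≤ (1 - γ) * h (xhat k) - γ * η * ε)
    (h0 : h (xhat 0) + η * ε ≤ 0) :
    ∀ k, h (xhat k) + η * ε ≤ 0 ∧ h (x k) ≤ 0 := by
  have hrobust : ∀ k, h (xhat k) + η * ε ≤ 0 :=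
    nonpos_of_succ_le_mul (u := fun k ↦ h (xhat k) + η * ε) (sub_nonneg.2 hγ1)
      (fun k ↦ by linear_combination hcbf k) h0
  intro k
  exact ⟨hrobust k, (le_add_mul_of_abs_sub_le_mul_norm hη (hLip _ _) (hd k)).trans (hrobust k)⟩

/-- Robust forward invariance: if `h` is `η`-Lipschitz, the true trajectory
stays within `ε` of the nominal one, the nominal trajectory satisfies the
RCBF constraint `h(x̂(k+1)) ≤ (1−γ)h(x̂(k)) − γηε`, and initially
`h(x̂(0)) + ηε ≤ 0`, then for every `k`, `h(x̂(k)) + ηε ≤ 0` and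
`h(x(k)) ≤ 0`: the safe set is forward invariant for the true trajectory. -/
theorem rcbf_forward_invariance {n : ℕ} (h : EuclideanSpace ℝ (Fin n) → ℝ)
    (η ε γ : ℝ) (hη : 0 ≤ η) (hε : 0 ≤ ε) (hγ0 : 0 < γ) (hγ1 : γ ≤ 1)
    (hLip : ∀ a b : EuclideanSpace ℝ (Fin n), |h a - h b| ≤ η * ‖a - b‖)
    (x xhat : ℕ → EuclideanSpace ℝ (Fin n))
    (hd : ∀ k, ‖x k - xhat k‖ ≤ ε)
    (hcbf : ∀ k, h (xhat (k + 1)) ≤ (1 - γ) * h (xhat k) - γ * η * ε)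
    (h0 : h (xhat 0) + η * ε ≤ 0) :
    ∀ k, h (xhat k) + η * ε ≤ 0 ∧ h (x k) ≤ 0 :=
  rcbf_forward_invariance_general h η ε γ hη hγ1 hLip x xhat hd hcbf h0
end
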